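/- arXiv:2208.02073 — 12 statements merged into one kernel-verified Lean document; each statement's English description precedes it below -/
import Mathlib

section
/- Let σ, λ, ψ > 0 and let c ∈ ℝ² be arbitrary. Then the piecewise-linear system in (x, z) ∈ ℝ² given by x + σψ·z·𝟙{z > 0} = c₁ and −λx + z = c₂ has a unique solution. (Coherence and completeness of the temporary equilibrium.) -/
/-!
Eliminating `x` (add `lam` times the first equation to the second) leaves the scalar equation
`z + σ·lam·ψ·max z 0 = lam·c₁ + c₂`, whose left side is piecewise linear with slopes `1` and
`1 + σ·lam·ψ`, both positive; hence it is a strictly increasing bijection of `ℝ`, and `x` is then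
read off the first equation.
-/

theorem mul_ite_pos_one_zero {K : Type*} [MulZeroOneClass K] [LinearOrder K] (z : K) :
    z * (if 0 < z then (1 : K) else 0) = max z 0 := by
  split_ifs with hz
  · rw [mul_one, max_eq_left hz.le]
  · rw [mul_zero, max_eq_right (not_lt.mp hz)]

section Kink

variable {K : Type*} [Field K] [LinearOrder K] [IsStrictOrderedRing K]

theorem strictMono_add_mul_max_zero {k : K} (hk : 0 < 1 + k) :
    StrictMono fun z : K => z + k * max z 0 := by
  refine StrictMonoOn.Iic_union_Ici (a := 0) (fun z hz w hw hzw => ?_) fun z hz w hw hzw => ?_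
  · simpa only [max_eq_right (Set.mem_Iic.mp hz), max_eq_right (Set.mem_Iic.mp hw), mul_zero,
      add_zero] using hzw
  · simp only [max_eq_left (Set.mem_Ici.mp hz), max_eq_left (Set.mem_Ici.mp hw)]
    nlinarith

theorem existsUnique_add_mul_max_zero_eq {k : K} (hk : 0 < 1 + k) (b : K) :
    ∃! z : K, z + k * max z 0 = b := by
  refine existsUnique_of_exists_of_unique ?_
    fun _ _ h₁ h₂ => (strictMono_add_mul_max_zero hk).injective (h₁.trans h₂.symm)
  by_cases hb : 0 < b
  · refine ⟨b / (1 + k), ?_⟩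
    rw [max_eq_left (div_pos hb hk).le]
    field_simp
  · exact ⟨b, by rw [max_eq_right (not_lt.mp hb), mul_zero, add_zero]⟩

end Kink

/-- For σ, λ, ψ > 0 and any c ∈ ℝ², the piecewise-linear system
x + σψ·z·𝟙{z > 0} = c₁, −λx + z = c₂ has a unique solution (coherence and completeness). -/
theorem stmt1 (σ lam ψ : ℝ) (hσ : 0 < σ) (hlam : 0 < lam) (hψ : 0 < ψ) (c₁ c₂ : ℝ) :
    ∃! xz : ℝ × ℝ,
      xz.1 + σ * ψ * xz.2 * (if 0 < xz.2 then (1:ℝ) else 0) = c₁ ∧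
      -lam * xz.1 + xz.2 = c₂ := by
  simp only [mul_assoc (σ * ψ), mul_ite_pos_one_zero]
  have hk : 0 < 1 + σ * lam * ψ := by positivity
  obtain ⟨z, hz, hz_unique⟩ := existsUnique_add_mul_max_zero_eq hk (lam * c₁ + c₂)
  refine ⟨(c₁ - σ * ψ * max z 0, z), ⟨by ring, by linear_combination hz⟩, ?_⟩
  rintro ⟨x', z'⟩ ⟨h₁, h₂⟩
  have hz' : z' = z := hz_unique z' (by linear_combination lam * h₁ + h₂)
  subst hz'
  ext
  · linear_combination h₁
  · rfl
end

section
/- Let β ∈ (0,1), λ, σ, μ > 0, ψ > 1, p ∈ (0,1). If p·ν(p) > 1 where ν(p) = 1 + λσ/(1 − βp), then the ZLB-regime output x = (σμ + ε₁)/(1 − p·ν(p)) is strictly decreasing in ε₁, and there exists a threshold ε̄ such that for all ε₁ < ε̄ the ZLB consistency condition ψ·(λ/(1−βp))·x ≤ −μ fails; hence no ZLB rational expectations solution exists for sufficiently negative ε₁. -/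
/-!
Income effects dominating means `p ν(p) > 1`, so the denominator `1 - p ν(p)` of the ZLB output
is negative: output falls as the shock rises. Once `σ μ + ε₁ < 0` the output is therefore
positive, and so is `ψ (λ / (1 - β p)) x`, which then cannot lie below `-μ < 0`.
-/

section

variable {K : Type*} [Field K] [LinearOrder K] [IsStrictOrderedRing K]

theorem strictAnti_add_div_of_neg {D : K} (hD : D < 0) (a : K) :
    StrictAnti fun e : K => (a + e) / D :=
  fun _ _ h => (div_lt_div_right_of_neg hD).mpr (add_lt_add_right h a)

theorem neg_lt_mul_add_div_of_neg {a c D e μ : K} (hc : 0 < c) (hμ : 0 < μ) (hD : D < 0)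
    (he : e < -a) : -μ < c * ((a + e) / D) := by
  have hx : 0 < (a + e) / D := div_pos_of_neg_of_neg (by linarith) hD
  linarith [mul_pos hc hx]

theorem one_sub_mul_pos_of_lt_one {β p : K} (hβ : β < 1) (hp0 : 0 < p) (hp1 : p < 1) :
    0 < 1 - β * p := by
  nlinarith

end

theorem stmt3_general (β lam σ μ ψ p : ℝ) (hβ1 : β < 1) (hlam : 0 < lam)
    (hμ : 0 < μ) (hψ : 1 < ψ) (hp0 : 0 < p) (hp1 : p < 1)
    (ν : ℝ → ℝ)
    (hpν : 1 < p * ν p) :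
    StrictAnti (fun ε₁ : ℝ => (σ * μ + ε₁) / (1 - p * ν p)) ∧
    (∃ εbar : ℝ, ∀ ε₁ < εbar,
      ¬ (ψ * (lam / (1 - β * p)) * ((σ * μ + ε₁) / (1 - p * ν p)) ≤ -μ)) := by
  have hD : 1 - p * ν p < 0 := by linarith
  have hc : 0 < ψ * (lam / (1 - β * p)) :=
    mul_pos (by linarith) (div_pos hlam (one_sub_mul_pos_of_lt_one hβ1 hp0 hp1))
  exact ⟨strictAnti_add_div_of_neg hD _,
    -(σ * μ), fun _ hε => not_le.mpr (neg_lt_mul_add_div_of_neg hc hμ hD hε)⟩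

/-- If p·ν(p) > 1, ZLB-regime output x = (σμ+ε₁)/(1−pν(p)) is strictly
decreasing in ε₁, and there is a threshold ε̄ below which the ZLB consistency condition
ψ·(λ/(1−βp))·x ≤ −μ fails: no ZLB REE for sufficiently negative shocks. -/
theorem stmt3 (β lam σ μ ψ p : ℝ) (hβ0 : 0 < β) (hβ1 : β < 1) (hlam : 0 < lam)
    (hσ : 0 < σ) (hμ : 0 < μ) (hψ : 1 < ψ) (hp0 : 0 < p) (hp1 : p < 1)
    (ν : ℝ → ℝ) (hν : ∀ s, ν s = 1 + lam * σ / (1 - β * s))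
    (hpν : 1 < p * ν p) :
    StrictAnti (fun ε₁ : ℝ => (σ * μ + ε₁) / (1 - p * ν p)) ∧
    (∃ εbar : ℝ, ∀ ε₁ < εbar,
      ¬ (ψ * (lam / (1 - β * p)) * ((σ * μ + ε₁) / (1 - p * ν p)) ≤ -μ)) :=
  stmt3_general β lam σ μ ψ p hβ1 hlam hμ hψ hp0 hp1 ν hpν
end

section
/- Let 0 < M, M_f ≤ 1, 0 < N ≤ 1, β ∈ (0,1), λ, σ > 0, and define the 2×2 matrix A = [[M, σN], [Mλ, M_f β + λσN]]. Then both eigenvalues of A lie strictly inside the unit circle (spectral radius < 1) if and only if (M − 1)(1 − M_f β) + λσN < 0. -/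
/-!
The characteristic polynomial of a real `2 × 2` matrix `A` is `z² - (tr A) z + det A`. By the
Jury criterion, both roots of a real quadratic `z² - T z + D` lie in the open unit disc iff
`|D| < 1` and `|T| < 1 + D`: real roots are handled through the signs of the polynomial at `±1`,
and a conjugate pair has `|z|² = D`. For the forward-guidance matrix `det A = M M_f β ∈ (0, 1)`
and `tr A > 0`, so stability reduces to `tr A < 1 + det A`, which is
`(M - 1)(1 - M_f β) + λσN < 0` rearranged.
-/

theorem Matrix.isRoot_charpoly_map_fin_two {R S : Type*} [CommRing R] [CommRing S] [Nontrivial S]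
    (f : R →+* S) (A : Matrix (Fin 2) (Fin 2) R) (z : S) :
    (A.map f).charpoly.IsRoot z ↔ z ^ 2 - f A.trace * z + f A.det = 0 := by
  simp [Matrix.charpoly_fin_two, Matrix.trace_fin_two, Matrix.det_fin_two]

theorem abs_mul_lt_one_and_abs_add_lt_one_add_mul {a b : ℝ} (ha : |a| < 1) (hb : |b| < 1) :
    |a * b| < 1 ∧ |a + b| < 1 + a * b := by
  rw [abs_lt] at ha hb
  refine ⟨?_, abs_lt.2 ⟨?_, ?_⟩⟩
  · rw [abs_mul]
    nlinarith [abs_nonneg a, abs_nonneg b, abs_lt.2 ha, abs_lt.2 hb]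
  · nlinarith
  · nlinarith

theorem abs_lt_one_of_sq_sub_mul_add_eq_zero {T D x : ℝ} (hD : |D| < 1) (hT : |T| < 1 + D)
    (hx : x ^ 2 - T * x + D = 0) : |x| < 1 := by
  rw [abs_lt] at hD hT ⊢
  constructor <;> by_contra! h <;> nlinarith

theorem Complex.norm_lt_one_of_sq_sub_mul_add_eq_zero {T D : ℝ} (hD : |D| < 1)
    (hT : |T| < 1 + D) {z : ℂ} (hz : z ^ 2 - T * z + D = 0) : ‖z‖ < 1 := by
  have hre := congrArg Complex.re hz
  have him := congrArg Complex.im hz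
  simp only [pow_two, Complex.sub_re, Complex.add_re, Complex.mul_re, Complex.ofReal_re,
    Complex.ofReal_im, Complex.sub_im, Complex.add_im, Complex.mul_im, Complex.zero_re,
    Complex.zero_im] at hre him
  rw [← sq_lt_one_iff₀ (norm_nonneg z), Complex.sq_norm, Complex.normSq_apply]
  rcases mul_eq_zero.1 (show z.im * (2 * z.re - T) = 0 by linarith) with him0 | hre0
  · have hx := abs_lt_one_of_sq_sub_mul_add_eq_zero hD hT (x := z.re)
      (by rw [him0] at hre; linarith)
    rw [him0]
    nlinarith [abs_mul_abs_self z.re, abs_nonneg z.re]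
  · have hnormSq : z.re * z.re + z.im * z.im = D := by
      linear_combination -hre + z.re * hre0
    rw [hnormSq]
    exact (abs_lt.1 hD).2

theorem quadratic_roots_norm_lt_one_iff (T D : ℝ) :
    (∀ z : ℂ, z ^ 2 - T * z + D = 0 → ‖z‖ < 1) ↔ |D| < 1 ∧ |T| < 1 + D := by
  refine ⟨fun h => ?_, fun ⟨hD, hT⟩ z hz => Complex.norm_lt_one_of_sq_sub_mul_add_eq_zero hD hT hz⟩
  rcases le_or_gt 0 (T ^ 2 - 4 * D) with hdisc | hdisc
  · set s := √(T ^ 2 - 4 * D)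
    have hs : s ^ 2 = T ^ 2 - 4 * D := Real.sq_sqrt hdisc
    have hreal : ∀ x : ℝ, x ^ 2 - T * x + D = 0 → |x| < 1 := fun x hx => by
      simpa using h x (by exact_mod_cast congrArg ((↑) : ℝ → ℂ) hx)
    have := abs_mul_lt_one_and_abs_add_lt_one_add_mul (hreal ((T + s) / 2) (by nlinarith))
      (hreal ((T - s) / 2) (by nlinarith))
    rwa [show (T + s) / 2 * ((T - s) / 2) = D by nlinarith,
      show (T + s) / 2 + (T - s) / 2 = T by ring] at this
  · obtain ⟨w, hw⟩ : ∃ w : ℝ, w ^ 2 = D - T ^ 2 / 4 := ⟨_, Real.sq_sqrt (by linarith)⟩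
    set z : ℂ := ⟨T / 2, w⟩
    have hz : z ^ 2 - T * z + D = 0 := by
      apply Complex.ext
      · simp only [pow_two, Complex.add_re, Complex.sub_re, Complex.mul_re, Complex.ofReal_re,
          Complex.ofReal_im, zero_mul, sub_zero, Complex.zero_re, z]
        nlinarith
      · simp only [pow_two, Complex.add_im, Complex.sub_im, Complex.mul_im, Complex.ofReal_re,
          Complex.ofReal_im, zero_mul, add_zero, Complex.zero_im, z]
        ring
    have hnorm : ‖z‖ ^ 2 = D := by
      rw [Complex.sq_norm, Complex.normSq_apply]
      simp only [z]
      nlinarith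
    have hD1 : D < 1 := by nlinarith [h z hz, norm_nonneg z]
    exact ⟨abs_lt.2 ⟨by nlinarith, hD1⟩,
      abs_lt_of_sq_lt_sq (by nlinarith [sq_nonneg (1 - D)]) (by nlinarith)⟩

/-- For A = [[M, σN],[Mλ, M_fβ + λσN]], both (complex) eigenvalues of A lie
strictly inside the unit circle iff (M − 1)(1 − M_f β) + λσN < 0. -/
theorem stmt5 (M Mf N β lam σ : ℝ)
    (hM : 0 < M ∧ M ≤ 1) (hMf : 0 < Mf ∧ Mf ≤ 1) (hN : 0 < N ∧ N ≤ 1)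
    (hβ0 : 0 < β) (hβ1 : β < 1) (hlam : 0 < lam) (hσ : 0 < σ) :
    (∀ z : ℂ,
        ((!![M, σ * N; M * lam, Mf * β + lam * σ * N] :
          Matrix (Fin 2) (Fin 2) ℝ).map (algebraMap ℝ ℂ)).charpoly.IsRoot z →
        ‖z‖ < 1) ↔
      (M - 1) * (1 - Mf * β) + lam * σ * N < 0 := by
  simp only [Matrix.isRoot_charpoly_map_fin_two]
  simp only [Complex.coe_algebraMap, quadratic_roots_norm_lt_one_iff, Matrix.trace_fin_two_of,
    Matrix.det_fin_two_of]
  obtain ⟨hM0, hM1⟩ := hM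
  obtain ⟨hMf0, hMf1⟩ := hMf
  have hdet : M * (Mf * β + lam * σ * N) - σ * N * (M * lam) = M * Mf * β := by ring
  have hdet_pos : 0 < M * Mf * β := by positivity
  have hdet_lt_one : M * Mf * β < 1 :=
    mul_lt_one_of_nonneg_of_lt_one_right (mul_le_one₀ hM1 hMf0.le hMf1) hβ0.le hβ1
  have htrace_pos : 0 < M + (Mf * β + lam * σ * N) := by
    have := hN.1
    positivity
  rw [hdet, abs_of_pos hdet_pos, abs_of_pos htrace_pos]
  constructor
  · rintro ⟨-, h⟩
    nlinarith
  · intro h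
    exact ⟨hdet_lt_one, by nlinarith⟩
end

section
/- Let λ, σ > 0, β ∈ (0,1), ψ > 0, and define A_P = (1/(1+λσψ))·[[1, σ − βσψ], [λ, β + λσ]]. Then both eigenvalues of A_P − I have strictly negative real parts whenever ψ > 1. (E-stability of the PP restricted perceptions equilibrium.) -/
/-! The matrix `A_P - I` has trace `(β - 1 + λσ(1 - 2ψ)) / (1 + λσψ)` and determinant
`λσ(ψ - 1) / (1 + λσψ)`. For `ψ > 1` the trace is negative and the determinant positive, and a
real 2 × 2 matrix with negative trace and positive determinant has characteristic polynomial
`z² + bz + c` with `b, c > 0`, whose complex roots all lie in the open left half-plane. -/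

open Polynomial

theorem Complex.re_neg_of_sq_add_mul_add_eq_zero {b c : ℝ} (hb : 0 < b) (hc : 0 < c) {z : ℂ}
    (hz : z ^ 2 + b * z + c = 0) : z.re < 0 := by
  have him : z.im * (2 * z.re + b) = 0 := by
    have := congrArg Complex.im hz
    simp only [pow_two, Complex.add_im, Complex.mul_im, Complex.ofReal_re, Complex.ofReal_im,
      Complex.zero_im] at this
    linear_combination this
  have hre : z.re ^ 2 - z.im ^ 2 + b * z.re + c = 0 := by
    have := congrArg Complex.re hz
    simp only [pow_two, Complex.add_re, Complex.mul_re, Complex.ofReal_re, Complex.ofReal_im,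
      Complex.zero_re] at this
    linear_combination this
  -- Either `z` is real, and `z ≥ 0` would make `z² + bz + c > 0`, or `Re z = -b/2`.
  rcases mul_eq_zero.1 him with h_real | h_axis
  · by_contra! h_nonneg
    nlinarith
  · linarith

theorem Matrix.re_neg_of_isRoot_charpoly_map_of_trace_neg_of_det_pos
    {M : Matrix (Fin 2) (Fin 2) ℝ} (htr : M.trace < 0) (hdet : 0 < M.det) {z : ℂ}
    (hz : ((M.map (algebraMap ℝ ℂ)).charpoly).IsRoot z) : z.re < 0 := by
  rw [Matrix.charpoly_map, Matrix.charpoly_fin_two, IsRoot, eval_map_algebraMap] at hz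
  simp only [map_add, map_sub, map_mul, aeval_X_pow, aeval_C, aeval_X,
    Complex.coe_algebraMap] at hz
  refine Complex.re_neg_of_sq_add_mul_add_eq_zero (neg_pos.2 htr) hdet ?_
  push_cast
  linear_combination hz

theorem stmt6_general (lam σ β ψ : ℝ) (hlam : 0 < lam) (hσ : 0 < σ)
    (hβ1 : β < 1) (hψ : 1 < ψ)
    (AP : Matrix (Fin 2) (Fin 2) ℝ)
    (hAP : AP = (1 / (1 + lam * σ * ψ)) • !![1, σ - β * σ * ψ; lam, β + lam * σ]) :
    ∀ z : ℂ, (((AP - 1).map (algebraMap ℝ ℂ)).charpoly).IsRoot z → z.re < 0 := by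
  intro z hz
  have hls : 0 < lam * σ := mul_pos hlam hσ
  have hD : 0 < 1 + lam * σ * ψ := by positivity
  have htr : (AP - 1).trace = (β - 1 + lam * σ * (1 - 2 * ψ)) / (1 + lam * σ * ψ) := by
    simp only [hAP, one_div, Matrix.smul_of, Matrix.smul_cons, smul_eq_mul, mul_one,
      Matrix.smul_empty, Matrix.trace_sub, Matrix.trace_fin_two, Matrix.of_apply,
      Matrix.cons_val', Matrix.cons_val_zero, Matrix.cons_val_fin_one, Matrix.cons_val_one,
      Matrix.trace_one, Fintype.card_fin, Nat.cast_ofNat]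
    field_simp
    ring
  have hdet : (AP - 1).det = lam * σ * (ψ - 1) / (1 + lam * σ * ψ) := by
    simp only [hAP, one_div, Matrix.smul_of, Matrix.smul_cons, smul_eq_mul, mul_one,
      Matrix.smul_empty, Matrix.det_fin_two, Matrix.sub_apply, Matrix.of_apply, Matrix.cons_val',
      Matrix.cons_val_zero, Matrix.cons_val_fin_one, Matrix.cons_val_one, Matrix.one_apply_eq,
      ne_eq, zero_ne_one, one_ne_zero, not_false_eq_true, Matrix.one_apply_ne, sub_zero]
    field_simp
    ring
  refine Matrix.re_neg_of_isRoot_charpoly_map_of_trace_neg_of_det_pos ?_ ?_ hz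
  · rw [htr]
    exact div_neg_of_neg_of_pos (by nlinarith) hD
  · rw [hdet]
    exact div_pos (mul_pos hls (sub_pos.2 hψ)) hD

/-- With A_P = (1/(1+λσψ))·[[1, σ−βσψ],[λ, β+λσ]], all eigenvalues of
A_P − I have strictly negative real parts whenever ψ > 1 (E-stability of the PP RPE). -/
theorem stmt6 (lam σ β ψ : ℝ) (hlam : 0 < lam) (hσ : 0 < σ)
    (hβ0 : 0 < β) (hβ1 : β < 1) (hψ : 1 < ψ)
    (AP : Matrix (Fin 2) (Fin 2) ℝ)
    (hAP : AP = (1 / (1 + lam * σ * ψ)) • !![1, σ - β * σ * ψ; lam, β + lam * σ]) :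
    ∀ z : ℂ, (((AP - 1).map (algebraMap ℝ ℂ)).charpoly).IsRoot z → z.re < 0 :=
  stmt6_general lam σ β ψ hlam hσ hβ1 hψ AP hAP
end

section
/- Let λ, σ > 0 and β ∈ (0,1), and define A_Z = [[1, σ], [λ, β + λσ]]. Then A_Z − I has at least one eigenvalue with strictly positive real part; consequently the ZZ restricted perceptions equilibrium is never E-stable. -/
/-!
`det (A_Z - I) = -λσ < 0`. The characteristic polynomial of a real matrix of even size is monic
with constant term equal to the determinant, so it is negative at `0` and tends to `+∞`; by the
intermediate value theorem it has a positive real root.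
-/

open Polynomial

theorem Polynomial.exists_pos_isRoot_of_eval_zero_neg {p : ℝ[X]} (hlc : 0 ≤ p.leadingCoeff)
    (h0 : p.eval 0 < 0) : ∃ x > 0, p.IsRoot x := by
  have hdeg : 0 < p.degree := by
    by_contra! hle
    rw [eq_C_of_degree_le_zero hle, leadingCoeff_C, coeff_zero_eq_eval_zero] at hlc
    exact hlc.not_gt h0
  obtain ⟨b, hb⟩ :=
    ((p.tendsto_atTop_of_leadingCoeff_nonneg hdeg hlc).eventually_gt_atTop 0).exists_forall_of_atTop
  have hb_pos : 0 < max b 1 := by positivity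
  obtain ⟨x, ⟨hx_pos, -⟩, hx⟩ := intermediate_value_Ioo hb_pos.le p.continuousOn
    ⟨h0, hb _ (le_max_left b 1)⟩
  exact ⟨x, hx_pos, hx⟩

theorem Matrix.exists_pos_isRoot_charpoly_of_det_neg {n : Type*} [Fintype n] [DecidableEq n]
    (M : Matrix n n ℝ) (hn : Even (Fintype.card n)) (hdet : M.det < 0) :
    ∃ x > 0, M.charpoly.IsRoot x := by
  refine exists_pos_isRoot_of_eval_zero_neg (by simp [M.charpoly_monic.leadingCoeff]) ?_
  rwa [← coeff_zero_eq_eval_zero, ← one_mul (M.charpoly.coeff 0), ← hn.neg_one_pow,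
    ← det_eq_sign_charpoly_coeff]

theorem stmt7_general (lam σ β : ℝ) (hlam : 0 < lam) (hσ : 0 < σ)
    (AZ : Matrix (Fin 2) (Fin 2) ℝ)
    (hAZ : AZ = !![1, σ; lam, β + lam * σ]) :
    ∃ z : ℂ, (((AZ - 1).map (algebraMap ℝ ℂ)).charpoly).IsRoot z ∧ 0 < z.re := by
  have hdet : (AZ - 1).det = -(lam * σ) := by
    rw [hAZ, Matrix.det_fin_two]
    simp [mul_comm]
  obtain ⟨x, hx_pos, hx⟩ := (AZ - 1).exists_pos_isRoot_charpoly_of_det_neg (by decide)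
    (by rw [hdet]; exact neg_neg_of_pos (mul_pos hlam hσ))
  refine ⟨x, ?_, by simpa using hx_pos⟩
  rw [Matrix.charpoly_map]
  exact hx.map

/-- With A_Z = [[1, σ],[λ, β+λσ]], the matrix A_Z − I has an eigenvalue with
strictly positive real part, so the ZZ restricted perceptions equilibrium is never E-stable. -/
theorem stmt7 (lam σ β : ℝ) (hlam : 0 < lam) (hσ : 0 < σ) (hβ0 : 0 < β) (hβ1 : β < 1)
    (AZ : Matrix (Fin 2) (Fin 2) ℝ)
    (hAZ : AZ = !![1, σ; lam, β + lam * σ]) :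
    ∃ z : ℂ, (((AZ - 1).map (algebraMap ℝ ℂ)).charpoly).IsRoot z ∧ 0 < z.re :=
  stmt7_general lam σ β hlam hσ AZ hAZ
end

section
/- Let λ, σ > 0, β ∈ (0,1), ψ > 1, q̄ ∈ [0,1], a := λσ, and define A_P = (1/(1+aψ))·[[1, σ − βσψ],[λ, β + a]] and A_Z = [[1, σ],[λ, β + a]]. Set B = q̄·A_P + (1−q̄)·A_Z. Then tr(B − I) < 0 and det(B − I) > 0 hold simultaneously if and only if q̄(1 + a)ψ − 1 − aψ > 0. -/
/-! With `D = 1 + aψ`, one has `det(B - I) = a (q̄(1 + a)ψ - D) / D`, so the determinant condition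
is exactly `q̄(1 + a)ψ > D`. That condition in turn forces the trace condition: it gives
`q̄aψ(1 + a) > aD`, and `β(D - q̄aψ) < D` since `0 < D - q̄aψ ≤ D` and `β < 1`. -/

namespace EStability

variable {lam σ β ψ q a : ℝ}

theorem trace_mix_sub_one (hD : 1 + a * ψ ≠ 0) :
    (q • ((1 / (1 + a * ψ)) • !![1, σ - β * σ * ψ; lam, β + a]) +
        (1 - q) • !![1, σ; lam, β + a] - 1).trace =
      β + a - 1 - q * a * ψ * (β + a + 1) / (a * ψ + 1) := by
  rw [Matrix.one_fin_two]
  simp only [Matrix.trace_fin_two, Matrix.sub_apply, Matrix.add_apply, Matrix.smul_apply,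
    Matrix.of_apply, Matrix.cons_val', Matrix.cons_val_zero, Matrix.cons_val_one,
    Matrix.empty_val', Matrix.cons_val_fin_one, smul_eq_mul]
  have hD' : a * ψ + 1 ≠ 0 := by rwa [add_comm]
  field_simp
  ring

theorem det_mix_sub_one (ha : a = lam * σ) (hD : 1 + a * ψ ≠ 0) :
    (q • ((1 / (1 + a * ψ)) • !![1, σ - β * σ * ψ; lam, β + a]) +
        (1 - q) • !![1, σ; lam, β + a] - 1).det =
      q * a * (a * ψ + ψ) / (a * ψ + 1) - a := by
  have hD' : a * ψ + 1 ≠ 0 := by rwa [add_comm]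
  subst ha
  rw [Matrix.one_fin_two]
  simp only [Matrix.det_fin_two, Matrix.sub_apply, Matrix.add_apply, Matrix.smul_apply,
    Matrix.of_apply, Matrix.cons_val', Matrix.cons_val_zero, Matrix.cons_val_one,
    Matrix.empty_val', Matrix.cons_val_fin_one, smul_eq_mul]
  field_simp
  ring

variable (ha : 0 < a) (hψ : 0 < ψ)
include ha hψ

theorem det_pos_iff :
    0 < q * a * (a * ψ + ψ) / (a * ψ + 1) - a ↔ 0 < q * (1 + a) * ψ - 1 - a * ψ := by
  have hD : 0 < a * ψ + 1 := by positivity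
  have hfactor : q * a * (a * ψ + ψ) / (a * ψ + 1) - a =
      a * (q * (1 + a) * ψ - 1 - a * ψ) / (a * ψ + 1) := by
    field_simp
    ring
  rw [hfactor, div_pos_iff_of_pos_right hD, mul_pos_iff_of_pos_left ha]

theorem trace_neg_of_det_pos (hβ : β < 1) (hq : q ≤ 1) (h : 0 < q * (1 + a) * ψ - 1 - a * ψ) :
    β + a - 1 - q * a * ψ * (β + a + 1) / (a * ψ + 1) < 0 := by
  have hD : 0 < a * ψ + 1 := by positivity
  have hq0 : 0 ≤ q := by
    by_contra! hq0
    nlinarith [mul_pos ha hψ]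
  have hslack : 0 < a * ψ + 1 - q * a * ψ := by nlinarith [mul_pos ha hψ]
  have hdet : a * (a * ψ + 1) < q * a * ψ * (1 + a) := by nlinarith
  have hβslack : β * (a * ψ + 1 - q * a * ψ) < a * ψ + 1 := by
    nlinarith [mul_nonneg (mul_nonneg hq0 ha.le) hψ.le]
  rw [sub_neg, lt_div_iff₀ hD]
  nlinarith

end EStability

theorem stmt8_general (lam σ β ψ qbar : ℝ) (hlam : 0 < lam) (hσ : 0 < σ)
    (hβ1 : β < 1) (hψ : 1 < ψ) (hq : qbar ∈ Set.Icc (0:ℝ) 1)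
    (a : ℝ) (ha : a = lam * σ)
    (AP AZ B : Matrix (Fin 2) (Fin 2) ℝ)
    (hAP : AP = (1 / (1 + a * ψ)) • !![1, σ - β * σ * ψ; lam, β + a])
    (hAZ : AZ = !![1, σ; lam, β + a])
    (hB : B = qbar • AP + (1 - qbar) • AZ) :
    ((B - 1).trace < 0 ∧ 0 < (B - 1).det) ↔ 0 < qbar * (1 + a) * ψ - 1 - a * ψ := by
  have ha0 : 0 < a := ha ▸ mul_pos hlam hσ
  have hψ0 : 0 < ψ := one_pos.trans hψ
  have hD : 1 + a * ψ ≠ 0 := by positivity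
  subst hB hAP hAZ
  rw [EStability.trace_mix_sub_one hD, EStability.det_mix_sub_one ha hD,
    EStability.det_pos_iff ha0 hψ0]
  exact ⟨And.right, fun h => ⟨EStability.trace_neg_of_det_pos ha0 hψ0 hβ1 hq.2 h, h⟩⟩

/-- For B = q̄·A_P + (1−q̄)·A_Z, the E-stability conditions
tr(B−I) < 0 and det(B−I) > 0 hold simultaneously iff q̄(1+a)ψ − 1 − aψ > 0. -/
theorem stmt8 (lam σ β ψ qbar : ℝ) (hlam : 0 < lam) (hσ : 0 < σ)
    (hβ0 : 0 < β) (hβ1 : β < 1) (hψ : 1 < ψ) (hq : qbar ∈ Set.Icc (0:ℝ) 1)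
    (a : ℝ) (ha : a = lam * σ)
    (AP AZ B : Matrix (Fin 2) (Fin 2) ℝ)
    (hAP : AP = (1 / (1 + a * ψ)) • !![1, σ - β * σ * ψ; lam, β + a])
    (hAZ : AZ = !![1, σ; lam, β + a])
    (hB : B = qbar • AP + (1 - qbar) • AZ) :
    ((B - 1).trace < 0 ∧ 0 < (B - 1).det) ↔ 0 < qbar * (1 + a) * ψ - 1 - a * ψ :=
  stmt8_general lam σ β ψ qbar hlam hσ hβ1 hψ hq a ha AP AZ B hAP hAZ hB
end

section
/- Let λ, σ > 0, β ∈ (0,1), ψ > 1, q̄ ∈ [0,1], a := λσ, and define C = (1−q̄)·A_P + q̄·A_Z with A_P, A_Z as in the New Keynesian regime maps. Then the E-stability condition tr(C − I) < 0 and det(C − I) > 0 holds if and only if ψ − 1 − q̄ψ(1 + a) > 0; in particular, since ψ − 1 − q̄ψ(1+a) > 0 contradicts the existence condition ψ − 1 − q̄ψ(1+a) < 0 for the PZ restricted perceptions equilibrium, the PZ RPE is never E-stable. -/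
/-!
Over the common denominator `1 + aψ`, one finds
`det (C - 1) = a (ψ - 1 - q̄ψ(1+a)) / (1 + aψ)`, so the determinant condition alone is
equivalent to `ψ - 1 - q̄ψ(1+a) > 0`. The trace condition is then automatic: the numerator of
`tr (C - 1)` equals `(β - 1) + aψ(q̄β - 1) - a (ψ - 1 - q̄ψ(1+a))`, a sum of negative terms.
-/

namespace NewKeynesian

/-- The convex combination `(1 - q) • A_P + q • A_Z` of the two regime maps, with `a = λσ`. -/
noncomputable def regimeMixture (lam σ β ψ q : ℝ) : Matrix (Fin 2) (Fin 2) ℝ :=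
  (1 - q) • ((1 / (1 + lam * σ * ψ)) • !![1, σ - β * σ * ψ; lam, β + lam * σ]) +
    q • !![1, σ; lam, β + lam * σ]

variable {lam σ β ψ q : ℝ}

theorem trace_regimeMixture_sub_one (hD : 1 + lam * σ * ψ ≠ 0) :
    (regimeMixture lam σ β ψ q - 1).trace =
      (β - 1 + lam * σ + lam * σ * ψ * (q * (1 + β + lam * σ) - 2)) / (1 + lam * σ * ψ) := by
  simp only [regimeMixture, Matrix.trace_fin_two, Matrix.sub_apply, Matrix.add_apply,
    Matrix.smul_apply, Matrix.one_apply_eq, Matrix.of_apply, Matrix.cons_val', Matrix.cons_val_zero,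
    Matrix.cons_val_one, Matrix.empty_val', Matrix.cons_val_fin_one, smul_eq_mul]
  field_simp
  ring

theorem det_regimeMixture_sub_one (hD : 1 + lam * σ * ψ ≠ 0) :
    (regimeMixture lam σ β ψ q - 1).det =
      lam * σ * (ψ - 1 - q * ψ * (1 + lam * σ)) / (1 + lam * σ * ψ) := by
  simp only [regimeMixture, Matrix.det_fin_two, Matrix.sub_apply, Matrix.add_apply,
    Matrix.smul_apply, Matrix.one_apply_eq, Matrix.one_apply_ne, Matrix.of_apply, Matrix.cons_val',
    Matrix.cons_val_zero, Matrix.cons_val_one, Matrix.empty_val', Matrix.cons_val_fin_one,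
    smul_eq_mul, ne_eq, zero_ne_one, one_ne_zero, not_false_eq_true]
  field_simp
  ring

theorem trace_numerator_neg {a : ℝ} (ha : 0 < a) (hψ : 0 < ψ) (hβ : β < 1) (hq0 : 0 ≤ q)
    (hq1 : q ≤ 1) (hE : 0 < ψ - 1 - q * ψ * (1 + a)) :
    β - 1 + a + a * ψ * (q * (1 + β + a) - 2) < 0 := by
  have hqβ : q * β - 1 ≤ 0 := by nlinarith
  calc β - 1 + a + a * ψ * (q * (1 + β + a) - 2)
      = (β - 1) + a * ψ * (q * β - 1) - a * (ψ - 1 - q * ψ * (1 + a)) := by ring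
    _ < 0 := by
      have := mul_nonpos_of_nonneg_of_nonpos (mul_pos ha hψ).le hqβ
      nlinarith [mul_pos ha hE]

theorem eStable_regimeMixture_iff (hlam : 0 < lam) (hσ : 0 < σ) (hβ : β < 1) (hψ : 0 < ψ)
    (hq : q ∈ Set.Icc (0 : ℝ) 1) :
    ((regimeMixture lam σ β ψ q - 1).trace < 0 ∧ 0 < (regimeMixture lam σ β ψ q - 1).det) ↔
      0 < ψ - 1 - q * ψ * (1 + lam * σ) := by
  have ha : 0 < lam * σ := mul_pos hlam hσ
  have hD : 0 < 1 + lam * σ * ψ := by positivity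
  have hdet : 0 < (regimeMixture lam σ β ψ q - 1).det ↔ 0 < ψ - 1 - q * ψ * (1 + lam * σ) := by
    rw [det_regimeMixture_sub_one hD.ne', div_pos_iff_of_pos_right hD, mul_pos_iff_of_pos_left ha]
  refine ⟨fun h => hdet.1 h.2, fun hE => ⟨?_, hdet.2 hE⟩⟩
  rw [trace_regimeMixture_sub_one hD.ne']
  exact div_neg_of_neg_of_pos (trace_numerator_neg ha hψ hβ hq.1 hq.2 hE) hD

end NewKeynesian

theorem stmt9_general (lam σ β ψ qbar : ℝ) (hlam : 0 < lam) (hσ : 0 < σ)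
    (hβ1 : β < 1) (hψ : 1 < ψ) (hq : qbar ∈ Set.Icc (0:ℝ) 1)
    (a : ℝ) (ha : a = lam * σ)
    (AP AZ C : Matrix (Fin 2) (Fin 2) ℝ)
    (hAP : AP = (1 / (1 + a * ψ)) • !![1, σ - β * σ * ψ; lam, β + a])
    (hAZ : AZ = !![1, σ; lam, β + a])
    (hC : C = (1 - qbar) • AP + qbar • AZ) :
    (((C - 1).trace < 0 ∧ 0 < (C - 1).det) ↔ 0 < ψ - 1 - qbar * ψ * (1 + a)) ∧
    ¬ (((C - 1).trace < 0 ∧ 0 < (C - 1).det) ∧ ψ - 1 - qbar * ψ * (1 + a) < 0) := by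
  subst ha hAP hAZ hC
  have hiff := NewKeynesian.eStable_regimeMixture_iff hlam hσ hβ1 (by linarith) hq
  exact ⟨hiff, fun ⟨hstable, hE⟩ => (hiff.1 hstable).not_gt hE⟩

/-- For C = (1−q̄)·A_P + q̄·A_Z, the E-stability conditions tr(C−I) < 0 and
det(C−I) > 0 hold iff ψ − 1 − q̄ψ(1+a) > 0; hence, since the PZ RPE exists only when
ψ − 1 − q̄ψ(1+a) < 0, an E-stable PZ RPE is impossible. -/
theorem stmt9 (lam σ β ψ qbar : ℝ) (hlam : 0 < lam) (hσ : 0 < σ)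
    (hβ0 : 0 < β) (hβ1 : β < 1) (hψ : 1 < ψ) (hq : qbar ∈ Set.Icc (0:ℝ) 1)
    (a : ℝ) (ha : a = lam * σ)
    (AP AZ C : Matrix (Fin 2) (Fin 2) ℝ)
    (hAP : AP = (1 / (1 + a * ψ)) • !![1, σ - β * σ * ψ; lam, β + a])
    (hAZ : AZ = !![1, σ; lam, β + a])
    (hC : C = (1 - qbar) • AP + qbar • AZ) :
    (((C - 1).trace < 0 ∧ 0 < (C - 1).det) ↔ 0 < ψ - 1 - qbar * ψ * (1 + a)) ∧
    ¬ (((C - 1).trace < 0 ∧ 0 < (C - 1).det) ∧ ψ - 1 - qbar * ψ * (1 + a) < 0) :=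
  stmt9_general lam σ β ψ qbar hlam hσ hβ1 hψ hq a ha AP AZ C hAP hAZ hC
end

section
/- Let λ, σ > 0, ψ > 1, β ∈ (0,1), σ_ε > 0, μ > 0. Define L(a) = (σ_ε λ)^{-1}(−μ/ψ − (1+λσ)a − λσμ) and h(a) = ((1+λσ)/(1+λσψ))·a + Φ(L(a))·(((1+λσ)λσψ/(1+λσψ))·a + λσμ) − φ(L(a))·λ²σ_ε σψ/(1+λσψ), where Φ and φ are the standard normal CDF and PDF. Then h'(a) − 1 = λσ(1−ψ)/(1+λσψ) + Φ(L(a))·λσψ(1+λσ)/(1+λσψ), this expression is strictly decreasing in a, and there is a unique a* with h'(a*) = 1; consequently the equation h(a) = a has at most two solutions, and it has (exactly two) solutions if and only if h(a*) ≥ a* (with two distinct solutions when h(a*) > a*). -/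
/-!
The φ-terms of `h'` cancel, leaving `h' = 1 + g` with `g a = A + B Φ(L a)`, `B > 0`. As `L` is
affine and decreasing, `g` decreases strictly from `λσ > 0` (at `-∞`) to
`λσ(1 - ψ)/(1 + λσψ) < 0` (at `+∞`), so it has a unique zero `a*`. Then `F a = h a - a` is
strictly increasing on `(-∞, a*]`, strictly decreasing on `[a*, ∞)`, and, lying below its
tangent lines, tends to `-∞` at both ends. So `F` has at most two zeros, has one iff
`F a* ≥ 0`, and has one on each side of `a*` when `F a* > 0`.
-/

open Set MeasureTheory Filter Topology Real ProbabilityTheory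

section IntegralIic

variable {f : ℝ → ℝ}

theorem integral_Iic_eq_add_intervalIntegral (hf : Integrable f) (a y : ℝ) :
    ∫ t in Iic y, f t = (∫ t in Iic a, f t) + ∫ t in a..y, f t := by
  rw [← intervalIntegral.integral_Iic_sub_Iic hf.integrableOn hf.integrableOn]
  ring

theorem hasDerivAt_integral_Iic (hf : Integrable f) {x : ℝ} (hx : ContinuousAt f x) :
    HasDerivAt (fun y => ∫ t in Iic y, f t) (f x) x := by
  rw [funext (integral_Iic_eq_add_intervalIntegral hf 0)]
  exact (intervalIntegral.integral_hasDerivAt_right hf.intervalIntegrable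
    hf.aestronglyMeasurable.stronglyMeasurableAtFilter hx).const_add _

theorem strictMono_integral_Iic (hf : Integrable f) (hpos : ∀ x, 0 < f x) :
    StrictMono fun y => ∫ t in Iic y, f t := fun x y hxy => by
  have := intervalIntegral.intervalIntegral_pos_of_pos hf.intervalIntegrable hpos hxy
  dsimp only
  rw [integral_Iic_eq_add_intervalIntegral hf x y]
  linarith

theorem tendsto_integral_Iic_atTop (hf : Integrable f) :
    Tendsto (fun y => ∫ t in Iic y, f t) atTop (𝓝 (∫ t, f t)) := by
  have := tendsto_setIntegral_of_monotone (μ := volume) (s := Iic) (f := f)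
    (fun _ => measurableSet_Iic) (fun _ _ hab => Iic_subset_Iic.2 hab)
    (by rw [iUnion_Iic]; exact hf.integrableOn)
  rwa [iUnion_Iic, Measure.restrict_univ] at this

theorem tendsto_integral_Iic_atBot (hf : Integrable f) :
    Tendsto (fun y => ∫ t in Iic y, f t) atBot (𝓝 0) := by
  have := (intervalIntegral_tendsto_integral_Iic 0 hf.integrableOn tendsto_id).const_sub
    (∫ t in Iic 0, f t)
  rw [sub_self] at this
  refine this.congr fun y => ?_
  rw [integral_Iic_eq_add_intervalIntegral hf 0 y, intervalIntegral.integral_symm]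
  simp

end IntegralIic

theorem gaussianPDFReal_zero_one (x : ℝ) :
    gaussianPDFReal 0 1 x = exp (-x ^ 2 / 2) / √(2 * π) := by
  simp [gaussianPDFReal, div_eq_inv_mul]

theorem hasDerivAt_gaussianPDFReal (μ : ℝ) (v : NNReal) (x : ℝ) :
    HasDerivAt (gaussianPDFReal μ v) (-(x - μ) / v * gaussianPDFReal μ v x) x := by
  have hexp : HasDerivAt (fun y => -(y - μ) ^ 2 / (2 * v)) (-(x - μ) / v) x :=
    ((((hasDerivAt_id' x).sub_const μ).pow 2).neg.div_const (2 * (v : ℝ))).congr_deriv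
      (by push_cast; ring)
  exact (hexp.exp.const_mul (√(2 * π * v))⁻¹).congr_deriv (by rw [gaussianPDFReal]; ring)

section ConcaveProfile

variable {F g : ℝ → ℝ}

theorem le_add_mul_sub_of_hasDerivAt_of_antitone (hF : ∀ x, HasDerivAt F (g x) x)
    (hg : Antitone g) (a x : ℝ) : F x ≤ F a + g a * (x - a) := by
  have hdiff : Differentiable ℝ F := fun x => (hF x).differentiableAt
  rcases le_total a x with hax | hxa
  · have := (convex_Ici a).image_sub_le_mul_sub_of_deriv_le hdiff.continuous.continuousOn
      hdiff.differentiableOn (fun y hy => by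
        rw [(hF y).deriv]; exact hg (interior_Ici.subset hy).le) a self_mem_Ici x hax hax
    linarith
  · have := (convex_Iic a).mul_sub_le_image_sub_of_le_deriv hdiff.continuous.continuousOn
      hdiff.differentiableOn (fun y hy => by
        rw [(hF y).deriv]; exact hg (interior_Iic.subset hy).le) x hxa a self_mem_Iic hxa
    linarith

theorem tendsto_atTop_atBot_of_hasDerivAt_of_antitone (hF : ∀ x, HasDerivAt F (g x) x)
    (hg : Antitone g) {b : ℝ} (hb : g b < 0) : Tendsto F atTop atBot :=
  tendsto_atBot_mono (le_add_mul_sub_of_hasDerivAt_of_antitone hF hg b)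
    (tendsto_atBot_add_const_left _ _
      ((tendsto_atTop_add_const_right _ (-b) tendsto_id).const_mul_atTop_of_neg hb))

theorem tendsto_atBot_atBot_of_hasDerivAt_of_antitone (hF : ∀ x, HasDerivAt F (g x) x)
    (hg : Antitone g) {a : ℝ} (ha : 0 < g a) : Tendsto F atBot atBot :=
  tendsto_atBot_mono (le_add_mul_sub_of_hasDerivAt_of_antitone hF hg a)
    (tendsto_atBot_add_const_left _ _
      ((tendsto_atBot_add_const_right _ (-a) tendsto_id).const_mul_atBot ha))

theorem strictMonoOn_Iic_of_hasDerivAt_of_strictAnti (hF : ∀ x, HasDerivAt F (g x) x)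
    (hg : StrictAnti g) {c : ℝ} (hc : g c = 0) : StrictMonoOn F (Iic c) :=
  have hFcont : Continuous F := continuous_iff_continuousAt.2 fun x => (hF x).continuousAt
  strictMonoOn_of_deriv_pos (convex_Iic c) hFcont.continuousOn fun x hx => by
    rw [(hF x).deriv, ← hc]; exact hg (interior_Iic.subset hx)

theorem strictAntiOn_Ici_of_hasDerivAt_of_strictAnti (hF : ∀ x, HasDerivAt F (g x) x)
    (hg : StrictAnti g) {c : ℝ} (hc : g c = 0) : StrictAntiOn F (Ici c) :=
  have hFcont : Continuous F := continuous_iff_continuousAt.2 fun x => (hF x).continuousAt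
  strictAntiOn_of_deriv_neg (convex_Ici c) hFcont.continuousOn fun x hx => by
    rw [(hF x).deriv, ← hc]; exact hg (interior_Ici.subset hx)

theorem finite_setOf_eq_zero_and_ncard_le_two {c : ℝ} (hmono : StrictMonoOn F (Iic c))
    (hanti : StrictAntiOn F (Ici c)) :
    {x | F x = 0}.Finite ∧ {x | F x = 0}.ncard ≤ 2 := by
  have hsplit : {x | F x = 0} ⊆ ({x | F x = 0} ∩ Iic c) ∪ ({x | F x = 0} ∩ Ici c) :=
    fun x hx => (le_total x c).imp (⟨hx, ·⟩) (⟨hx, ·⟩)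
  have hleft : ({x | F x = 0} ∩ Iic c).Subsingleton :=
    fun x hx y hy => hmono.injOn hx.2 hy.2 (hx.1.trans hy.1.symm)
  have hright : ({x | F x = 0} ∩ Ici c).Subsingleton :=
    fun x hx y hy => hanti.injOn hx.2 hy.2 (hx.1.trans hy.1.symm)
  have hfin := hleft.finite.union hright.finite
  refine ⟨hfin.subset hsplit, ?_⟩
  calc {x | F x = 0}.ncard ≤ (({x | F x = 0} ∩ Iic c) ∪ ({x | F x = 0} ∩ Ici c)).ncard :=
        ncard_le_ncard hsplit hfin
    _ ≤ ({x | F x = 0} ∩ Iic c).ncard + ({x | F x = 0} ∩ Ici c).ncard := ncard_union_le _ _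
    _ ≤ 1 + 1 := add_le_add ((ncard_le_one hleft.finite).2 fun x hx y hy => hleft hx hy)
        ((ncard_le_one hright.finite).2 fun x hx y hy => hright hx hy)

end ConcaveProfile

theorem existsUnique_eq_zero_of_strictAnti {g : ℝ → ℝ} (hcont : Continuous g)
    (hanti : StrictAnti g) {a b : ℝ} (ha : 0 < g a) (hb : g b < 0) : ∃! x, g x = 0 := by
  have hab : a < b := hanti.lt_iff_gt.1 (hb.trans ha)
  obtain ⟨x, -, hx⟩ := intermediate_value_Icc' hab.le hcont.continuousOn ⟨hb.le, ha.le⟩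
  exact ⟨x, hx, fun y hy => hanti.injective (hy.trans hx.symm)⟩

theorem fixedPoints_of_hasDerivAt_one_add {h g : ℝ → ℝ} (hd : ∀ x, HasDerivAt h (1 + g x) x)
    (hg : StrictAnti g) {a b c : ℝ} (ha : 0 < g a) (hb : g b < 0) (hc : g c = 0) :
    ({x | h x = x}.Finite ∧ {x | h x = x}.ncard ≤ 2) ∧
      ((∃ x, h x = x) ↔ c ≤ h c) ∧
      (c < h c → ∃ x y, x ≠ y ∧ h x = x ∧ h y = y) := by
  set F := fun x => h x - x
  have hF : ∀ x, HasDerivAt F (g x) x := fun x =>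
    ((hd x).sub (hasDerivAt_id x)).congr_deriv (by ring)
  have hFcont : Continuous F := continuous_iff_continuousAt.2 fun x => (hF x).continuousAt
  have hfix : ∀ x, h x = x ↔ F x = 0 := fun x => sub_eq_zero.symm
  have hmono := strictMonoOn_Iic_of_hasDerivAt_of_strictAnti hF hg hc
  have hanti := strictAntiOn_Ici_of_hasDerivAt_of_strictAnti hF hg hc
  have hmax : ∀ x, F x ≤ F c := fun x => (le_total x c).elim
    (fun hxc => hmono.monotoneOn hxc self_mem_Iic hxc)
    (fun hcx => hanti.antitoneOn self_mem_Ici hcx hcx)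
  have hleft : c ≤ h c → ∃ x ∈ Iic c, F x = 0 := fun h0 =>
    intermediate_value_Iic hFcont.continuousOn
      (tendsto_atBot_atBot_of_hasDerivAt_of_antitone hF hg.antitone ha)
      (sub_nonneg.2 h0)
  have hright : c ≤ h c → ∃ y ∈ Ici c, F y = 0 := fun h0 =>
    intermediate_value_Ici' hFcont.continuousOn
      (tendsto_atTop_atBot_of_hasDerivAt_of_antitone hF hg.antitone hb)
      (sub_nonneg.2 h0)
  refine ⟨?_, ⟨fun ⟨x, hx⟩ => ?_, fun h0 => ?_⟩, fun h0 => ?_⟩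
  · simp_rw [hfix]
    exact finite_setOf_eq_zero_and_ncard_le_two hmono hanti
  · have := hmax x
    simp only [F] at this
    linarith
  · obtain ⟨x, -, hx⟩ := hleft h0
    exact ⟨x, (hfix x).2 hx⟩
  · obtain ⟨x, hxc, hx⟩ := hleft h0.le
    obtain ⟨y, hcy, hy⟩ := hright h0.le
    refine ⟨x, y, fun hxy => ?_, (hfix x).2 hx, (hfix y).2 hy⟩
    have hxc' : x = c := le_antisymm hxc (hxy ▸ hcy)
    simp only [F, hxc'] at hx
    linarith

section MeanMap

variable {lam σ ψ σε μ : ℝ} {φf Φf L h g : ℝ → ℝ}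

/-- With `φ' = -x φ` and `L' = -(1 + λσ)/(σε λ)`, substituting `σε λ L a` shows that the
coefficient of `φ (L a)` in `h'` is `λσμ (1 + λσψ - 1 - λσψ)/(1 + λσψ) = 0`. -/
theorem hasDerivAt_meanMap (hlam : lam ≠ 0) (hσε : σε ≠ 0) (hψ : ψ ≠ 0)
    (hD : 1 + lam * σ * ψ ≠ 0)
    (hΦ : ∀ x, HasDerivAt Φf (φf x) x) (hφ : ∀ x, HasDerivAt φf (-x * φf x) x)
    (hL : ∀ a, L a = (σε * lam)⁻¹ * (-μ / ψ - (1 + lam * σ) * a - lam * σ * μ))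
    (hh : ∀ a, h a = (1 + lam * σ) / (1 + lam * σ * ψ) * a
      + Φf (L a) * ((1 + lam * σ) * lam * σ * ψ / (1 + lam * σ * ψ) * a + lam * σ * μ)
      - φf (L a) * lam ^ 2 * σε * σ * ψ / (1 + lam * σ * ψ))
    (hg : ∀ a, g a = lam * σ * (1 - ψ) / (1 + lam * σ * ψ)
      + Φf (L a) * (lam * σ * ψ * (1 + lam * σ) / (1 + lam * σ * ψ)))
    (a : ℝ) : HasDerivAt h (1 + g a) a := by
  obtain rfl : L = _ := funext hL
  obtain rfl : h = _ := funext hh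
  have hL' : HasDerivAt (fun a => (σε * lam)⁻¹ * (-μ / ψ - (1 + lam * σ) * a - lam * σ * μ))
      (-(1 + lam * σ) / (σε * lam)) a :=
    ((((hasDerivAt_id' a).const_mul _).const_sub _).sub_const _).const_mul _ |>.congr_deriv
      (by field_simp)
  refine HasDerivAt.congr_deriv ((((hasDerivAt_id' a).const_mul _).add
    (((hΦ _).comp a hL').mul (((hasDerivAt_id' a).const_mul _).add_const _))).sub
    (((((((hφ _).comp a hL').mul_const _).mul_const _).mul_const _).mul_const _).div_const _)) ?_
  rw [hg, Function.comp_apply]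
  field_simp
  ring

theorem meanMap_L_eq (hlam : lam ≠ 0) (hσε : σε ≠ 0)
    (hL : ∀ a, L a = (σε * lam)⁻¹ * (-μ / ψ - (1 + lam * σ) * a - lam * σ * μ)) :
    L = fun a => -((1 + lam * σ) / (σε * lam)) * a + (-μ / ψ - lam * σ * μ) / (σε * lam) :=
  funext fun a => by rw [hL]; field_simp; ring

theorem meanMap_L_slope_neg (hlam : 0 < lam) (hσ : 0 < σ) (hσε : 0 < σε) :
    -((1 + lam * σ) / (σε * lam)) < 0 :=
  neg_lt_zero.2 (div_pos (by nlinarith) (mul_pos hσε hlam))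

theorem strictAnti_meanMap_L (hlam : 0 < lam) (hσ : 0 < σ) (hσε : 0 < σε)
    (hL : ∀ a, L a = (σε * lam)⁻¹ * (-μ / ψ - (1 + lam * σ) * a - lam * σ * μ)) :
    StrictAnti L := by
  rw [meanMap_L_eq hlam.ne' hσε.ne' hL]
  exact fun x y hxy => add_lt_add_left (mul_lt_mul_of_neg_left hxy
    (meanMap_L_slope_neg hlam hσ hσε)) _

theorem tendsto_meanMap_L_atBot (hlam : 0 < lam) (hσ : 0 < σ) (hσε : 0 < σε)
    (hL : ∀ a, L a = (σε * lam)⁻¹ * (-μ / ψ - (1 + lam * σ) * a - lam * σ * μ)) :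
    Tendsto L atBot atTop := by
  rw [meanMap_L_eq hlam.ne' hσε.ne' hL]
  exact tendsto_atTop_add_const_right _ _
    (tendsto_id.const_mul_atBot_of_neg (meanMap_L_slope_neg hlam hσ hσε))

theorem tendsto_meanMap_L_atTop (hlam : 0 < lam) (hσ : 0 < σ) (hσε : 0 < σε)
    (hL : ∀ a, L a = (σε * lam)⁻¹ * (-μ / ψ - (1 + lam * σ) * a - lam * σ * μ)) :
    Tendsto L atTop atBot := by
  rw [meanMap_L_eq hlam.ne' hσε.ne' hL]
  exact tendsto_atBot_add_const_right _ _
    (tendsto_id.const_mul_atTop_of_neg (meanMap_L_slope_neg hlam hσ hσε))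

theorem strictAnti_meanMap_deriv_sub_one (hlam : 0 < lam) (hσ : 0 < σ) (hψ : 0 < ψ)
    (hΦ : StrictMono Φf) (hL : StrictAnti L)
    (hg : ∀ a, g a = lam * σ * (1 - ψ) / (1 + lam * σ * ψ)
      + Φf (L a) * (lam * σ * ψ * (1 + lam * σ) / (1 + lam * σ * ψ))) :
    StrictAnti g := fun x y hxy => by
  have hls := mul_pos hlam hσ
  have hB : 0 < lam * σ * ψ * (1 + lam * σ) / (1 + lam * σ * ψ) :=
    div_pos (mul_pos (mul_pos hls hψ) (by linarith)) (by nlinarith)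
  rw [hg, hg]
  gcongr
  exact hΦ (hL hxy)

theorem exists_meanMap_deriv_sub_one_pos (hlam : 0 < lam) (hσ : 0 < σ) (hψ : 0 < ψ)
    (hΦ : Tendsto Φf atTop (𝓝 1)) (hL : Tendsto L atBot atTop)
    (hg : ∀ a, g a = lam * σ * (1 - ψ) / (1 + lam * σ * ψ)
      + Φf (L a) * (lam * σ * ψ * (1 + lam * σ) / (1 + lam * σ * ψ))) :
    ∃ a, 0 < g a := by
  have hlim : Tendsto g atBot (𝓝 (lam * σ)) := by
    have hD : 1 + lam * σ * ψ ≠ 0 := by nlinarith [mul_pos hlam hσ]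
    have := ((hΦ.comp hL).mul_const (lam * σ * ψ * (1 + lam * σ) / (1 + lam * σ * ψ))).const_add
      (lam * σ * (1 - ψ) / (1 + lam * σ * ψ))
    rw [show lam * σ * (1 - ψ) / (1 + lam * σ * ψ)
      + 1 * (lam * σ * ψ * (1 + lam * σ) / (1 + lam * σ * ψ)) = lam * σ by field_simp; ring] at this
    exact this.congr fun a => (hg a).symm
  exact (hlim.eventually (eventually_gt_nhds (mul_pos hlam hσ))).exists

theorem exists_meanMap_deriv_sub_one_neg (hlam : 0 < lam) (hσ : 0 < σ) (hψ : 1 < ψ)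
    (hΦ : Tendsto Φf atBot (𝓝 0)) (hL : Tendsto L atTop atBot)
    (hg : ∀ a, g a = lam * σ * (1 - ψ) / (1 + lam * σ * ψ)
      + Φf (L a) * (lam * σ * ψ * (1 + lam * σ) / (1 + lam * σ * ψ))) :
    ∃ b, g b < 0 := by
  have hlim : Tendsto g atTop (𝓝 (lam * σ * (1 - ψ) / (1 + lam * σ * ψ))) := by
    rw [funext hg]
    simpa using ((hΦ.comp hL).mul_const _).const_add _
  have hneg : lam * σ * (1 - ψ) / (1 + lam * σ * ψ) < 0 := by
    have hls := mul_pos hlam hσ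
    apply div_neg_of_neg_of_pos <;> nlinarith
  exact (hlim.eventually (eventually_lt_nhds hneg)).exists

end MeanMap

theorem stmt14_general (lam σ ψ σε μ : ℝ) (hlam : 0 < lam) (hσ : 0 < σ) (hψ : 1 < ψ)
    (hσε : 0 < σε)
    (φf Φf L h g : ℝ → ℝ)
    (hφ : ∀ x, φf x = Real.exp (-x ^ 2 / 2) / Real.sqrt (2 * Real.pi))
    (hΦ : ∀ x, Φf x = ∫ t in Set.Iic x, φf t)
    (hL : ∀ a, L a = (σε * lam)⁻¹ * (-μ / ψ - (1 + lam * σ) * a - lam * σ * μ))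
    (hh : ∀ a, h a = (1 + lam * σ) / (1 + lam * σ * ψ) * a
      + Φf (L a) * ((1 + lam * σ) * lam * σ * ψ / (1 + lam * σ * ψ) * a + lam * σ * μ)
      - φf (L a) * lam ^ 2 * σε * σ * ψ / (1 + lam * σ * ψ))
    (hg : ∀ a, g a = lam * σ * (1 - ψ) / (1 + lam * σ * ψ)
      + Φf (L a) * (lam * σ * ψ * (1 + lam * σ) / (1 + lam * σ * ψ))) :
    (∀ a, HasDerivAt h (1 + g a) a) ∧
    StrictAnti g ∧
    (∃! astar : ℝ, g astar = 0) ∧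
    (∀ astar : ℝ, g astar = 0 →
      ({x : ℝ | h x = x}.Finite ∧ {x : ℝ | h x = x}.ncard ≤ 2) ∧
      ((∃ x : ℝ, h x = x) ↔ astar ≤ h astar) ∧
      (astar < h astar → ∃ x y : ℝ, x ≠ y ∧ h x = x ∧ h y = y)) := by
  obtain rfl : φf = gaussianPDFReal 0 1 := funext fun x => by rw [hφ, gaussianPDFReal_zero_one]
  obtain rfl : Φf = fun x => ∫ t in Iic x, gaussianPDFReal 0 1 t := funext hΦ
  have hint := integrable_gaussianPDFReal 0 1
  have hpdf' := hasDerivAt_gaussianPDFReal 0 1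
  have hΦmono := strictMono_integral_Iic hint (gaussianPDFReal_pos 0 1 · one_ne_zero)
  have hΦtop := tendsto_integral_Iic_atTop hint
  rw [integral_gaussianPDFReal_eq_one 0 one_ne_zero] at hΦtop
  have hΦ' x := hasDerivAt_integral_Iic hint (hpdf' x).continuousAt
  have hd : ∀ a, HasDerivAt h (1 + g a) a :=
    hasDerivAt_meanMap hlam.ne' hσε.ne' (by linarith) (by nlinarith [mul_pos hlam hσ]) hΦ'
      (fun x => (hpdf' x).congr_deriv (by simp)) hL hh hg
  have hanti : StrictAnti g := strictAnti_meanMap_deriv_sub_one hlam hσ (by linarith) hΦmono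
    (strictAnti_meanMap_L hlam hσ hσε hL) hg
  obtain ⟨a, ha⟩ := exists_meanMap_deriv_sub_one_pos hlam hσ (by linarith) hΦtop
    (tendsto_meanMap_L_atBot hlam hσ hσε hL) hg
  obtain ⟨b, hb⟩ := exists_meanMap_deriv_sub_one_neg hlam hσ hψ (tendsto_integral_Iic_atBot hint)
    (tendsto_meanMap_L_atTop hlam hσ hσε hL) hg
  have hgcont : Continuous g := by
    have := continuous_iff_continuousAt.2 fun x => (hΦ' x).continuousAt
    rw [funext hg, meanMap_L_eq hlam.ne' hσε.ne' hL]
    exact continuous_const.add ((this.comp (by fun_prop)).mul continuous_const)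
  exact ⟨hd, hanti, existsUnique_eq_zero_of_strictAnti hgcont hanti ha hb,
    fun c hc => fixedPoints_of_hasDerivAt_one_add hd hanti ha hb hc⟩

/-- For the RPE mean map h with Gaussian shocks, h'(a) − 1 =
λσ(1−ψ)/(1+λσψ) + Φ(L(a))·λσψ(1+λσ)/(1+λσψ); this is strictly decreasing in a, there is a
unique a* with h'(a*) = 1, the fixed-point equation h(a) = a has at most two solutions,
it has a solution iff h(a*) ≥ a*, and two distinct solutions when h(a*) > a*. -/
theorem stmt14 (lam σ ψ β σε μ : ℝ) (hlam : 0 < lam) (hσ : 0 < σ) (hψ : 1 < ψ)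
    (hβ0 : 0 < β) (hβ1 : β < 1) (hσε : 0 < σε) (hμ : 0 < μ)
    (φf Φf L h g : ℝ → ℝ)
    (hφ : ∀ x, φf x = Real.exp (-x ^ 2 / 2) / Real.sqrt (2 * Real.pi))
    (hΦ : ∀ x, Φf x = ∫ t in Set.Iic x, φf t)
    (hL : ∀ a, L a = (σε * lam)⁻¹ * (-μ / ψ - (1 + lam * σ) * a - lam * σ * μ))
    (hh : ∀ a, h a = (1 + lam * σ) / (1 + lam * σ * ψ) * a
      + Φf (L a) * ((1 + lam * σ) * lam * σ * ψ / (1 + lam * σ * ψ) * a + lam * σ * μ)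
      - φf (L a) * lam ^ 2 * σε * σ * ψ / (1 + lam * σ * ψ))
    (hg : ∀ a, g a = lam * σ * (1 - ψ) / (1 + lam * σ * ψ)
      + Φf (L a) * (lam * σ * ψ * (1 + lam * σ) / (1 + lam * σ * ψ))) :
    (∀ a, HasDerivAt h (1 + g a) a) ∧
    StrictAnti g ∧
    (∃! astar : ℝ, g astar = 0) ∧
    (∀ astar : ℝ, g astar = 0 →
      ({x : ℝ | h x = x}.Finite ∧ {x : ℝ | h x = x}.ncard ≤ 2) ∧
      ((∃ x : ℝ, h x = x) ↔ astar ≤ h astar) ∧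
      (astar < h astar → ∃ x y : ℝ, x ≠ y ∧ h x = x ∧ h y = y)) :=
  stmt14_general lam σ ψ σε μ hlam hσ hψ hσε φf Φf L h g hφ hΦ hL hh hg
end

section
/- Let λ, σ, μ > 0, ψ > 1, and ε₂ ≥ 0, and suppose q̄ = 1 (absorbing high state). In the restricted perceptions equilibrium with zero expected inflation and output (Ê_t x_{t+1} = Ê_t π_{t+1} = 0), for every ε₁ ∈ ℝ exactly one of the following holds: (i) ε₁ > ε^PP := −μ(1+λσψ)/(λψ) and the positive-rate solution x = ε₁/(1+λσψ), π = λε₁/(1+λσψ) satisfies ψπ > −μ; or (ii) ε₁ ≤ ε^PP and the ZLB solution x = σμ + ε₁, π = λ(σμ + ε₁) satisfies ψπ ≤ −μ. Hence a restricted perceptions equilibrium exists for every ε₁ ∈ ℝ, with no lower bound on the shock. -/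
/-- With zero expected inflation/output (q̄ = 1 RPE forecast), for every ε₁
exactly one of the following holds: (i) ε₁ > ε^PP := −μ(1+λσψ)/(λψ) and the positive-rate
solution satisfies ψπ > −μ; or (ii) ε₁ ≤ ε^PP and the ZLB solution satisfies ψπ ≤ −μ.
Hence a restricted perceptions equilibrium exists for every ε₁. -/
theorem stmt15 (lam σ μ ψ : ℝ) (hlam : 0 < lam) (hσ : 0 < σ) (hμ : 0 < μ) (hψ : 1 < ψ)
    (ε₂ : ℝ) (hε₂ : 0 ≤ ε₂)
    (εPP : ℝ) (hεPP : εPP = -μ * (1 + lam * σ * ψ) / (lam * ψ)) :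
    ∀ ε₁ : ℝ,
      Xor' (εPP < ε₁ ∧ -μ < ψ * (lam * ε₁ / (1 + lam * σ * ψ)))
           (ε₁ ≤ εPP ∧ ψ * (lam * (σ * μ + ε₁)) ≤ -μ) := by
  intro ε₁
  have hψ0 : 0 < ψ := lt_trans one_pos hψ
  have hD : 0 < 1 + lam * σ * ψ := by positivity
  have hlψ : 0 < lam * ψ := by positivity
  rcases le_or_gt ε₁ εPP with h | h
  · right
    refine ⟨⟨h, ?_⟩, fun hc => absurd hc.1 (not_lt.mpr h)⟩
    rw [hεPP] at h
    rw [le_div_iff₀ hlψ] at h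
    nlinarith
  · left
    refine ⟨⟨h, ?_⟩, fun hc => absurd h (not_lt.mpr hc.1)⟩
    rw [hεPP] at h
    rw [div_lt_iff₀ hlψ] at h
    rw [show ψ * (lam * ε₁ / (1 + lam * σ * ψ)) = ψ * lam * ε₁ / (1 + lam * σ * ψ) from by ring,
      lt_div_iff₀ hD]
    nlinarith
end

section
/- Let 0 < M, M_f, N ≤ 1, β ∈ (0,1), λ, σ > 0, p, q ∈ (0,1], a = λσ, ρ = p+q−1, and suppose δ := (M−1)(1−M_f β) + aN < 0. Then: (i) det(I₂ − (M + M_f β + aN)K + βMM_f K²) = −δ(−δ + (1−ρ)(M + aN + M_f β(1 − M(p+q)))) > 0; and (ii) det(I₂ − (M + M_f β + aN)K + βMM_f K² + aψ e₂e₂ᵀ) > 0 for every ψ > 1, where K = [[p, 1−p],[1−q, q]] and e₂ = (0,1)ᵀ. -/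
/-!
The two-state transition matrix `K` has eigenvalues `1` and `ρ = p + q - 1`, so
`det (1 - s K + b K²)` factors as `(1 - s + b)(1 - s ρ + b ρ²)`. For `s = M + M_f β + a N` and
`b = β M M_f` the first factor is `-δ`, and the second rewrites as
`-δ + (1 - ρ)(M + a N + M_f β (1 - M (p + q)))`, a sum of a positive and a nonnegative term.
Adding `a ψ e₂e₂ᵀ` raises the determinant by `a ψ Q₀₀`, and `Q₀₀` is a positive combination
of `1 - p`, `p (-δ)` and `(1 - p)(1 - q)`.
-/

open Matrix

def twoStateTransition (p q : ℝ) : Matrix (Fin 2) (Fin 2) ℝ := !![p, 1 - p; 1 - q, q]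

namespace twoStateTransition

variable (p q s b : ℝ)

lemma one_sub_smul_add_smul_sq :
    1 - s • twoStateTransition p q + b • (twoStateTransition p q * twoStateTransition p q) =
      !![1 - s * p + b * (p * p + (1 - p) * (1 - q)), -(s * (1 - p)) + b * ((1 - p) * (p + q));
        -(s * (1 - q)) + b * ((1 - q) * (p + q)), 1 - s * q + b * ((1 - p) * (1 - q) + q * q)] := by
  ext i j
  fin_cases i <;> fin_cases j <;>
    simp only [twoStateTransition, Matrix.add_apply, Matrix.sub_apply, Matrix.smul_apply,
      smul_eq_mul, mul_apply, Fin.sum_univ_two, one_apply, of_apply, cons_val', cons_val_zero,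
      cons_val_one, empty_val', cons_val_fin_one, Fin.mk_zero, Fin.mk_one, Fin.isValue,
      reduceIte, Fin.reduceEq] <;> ring

lemma det_one_sub_smul_add_smul_sq :
    (1 - s • twoStateTransition p q + b • (twoStateTransition p q * twoStateTransition p q)).det =
      (1 - s + b) * (1 - s * (p + q - 1) + b * (p + q - 1) ^ 2) := by
  rw [one_sub_smul_add_smul_sq, det_fin_two_of]
  ring

variable {p q s b}

lemma one_sub_smul_add_smul_sq_zero_zero_pos (hp0 : 0 ≤ p) (hp1 : p ≤ 1) (hq1 : q ≤ 1)
    (hb0 : 0 ≤ b) (hb1 : b ≤ 1) (hsb : 0 < 1 - s + b) :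
    0 < (1 - s • twoStateTransition p q +
      b • (twoStateTransition p q * twoStateTransition p q)) 0 0 := by
  rw [one_sub_smul_add_smul_sq]
  have hsplit : 1 - s * p + b * (p * p + (1 - p) * (1 - q)) =
      (1 - p) * (1 - b * p) + p * (1 - s + b) + b * ((1 - p) * (1 - q)) := by ring
  have hbp : 0 ≤ 1 - b * p := by nlinarith
  simp only [of_apply, cons_val', cons_val_zero, empty_val', cons_val_fin_one]
  rw [hsplit]
  rcases hp0.eq_or_lt with rfl | hp
  · nlinarith [mul_nonneg hb0 (sub_nonneg.2 hq1)]
  · have := mul_pos hp hsb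
    have := mul_nonneg (sub_nonneg.2 hp1) hbp
    have := mul_nonneg hb0 (mul_nonneg (sub_nonneg.2 hp1) (sub_nonneg.2 hq1))
    linarith

end twoStateTransition

lemma Matrix.det_fin_two_add_smul_single_one_one {R : Type*} [CommRing R]
    (A : Matrix (Fin 2) (Fin 2) R) (c : R) :
    (A + c • !![0, 0; 0, 1]).det = A.det + c * A 0 0 := by
  simp [det_fin_two]
  ring

lemma add_add_mul_one_sub_mul_pos {M m x r : ℝ} (hM0 : 0 < M) (hM1 : M ≤ 1) (hm0 : 0 ≤ m)
    (hm1 : m < 1) (hx : 0 ≤ x) (hr : r ≤ 2) :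
    0 < M + x + m * (1 - M * r) := by
  nlinarith [mul_pos hM0 (sub_pos.2 hm1), mul_nonneg hm0 (sub_nonneg.2 hM1),
    mul_nonneg (mul_nonneg hm0 hM0.le) (sub_nonneg.2 hr)]

/-- With δ = (M−1)(1−M_fβ) + aN < 0, for
Q = I − (M + M_fβ + aN)K + βMM_fK²: (i) det Q = −δ(−δ + (1−ρ)(M + aN + M_fβ(1−M(p+q)))) > 0;
(ii) det(Q + aψ·e₂e₂ᵀ) > 0 for every ψ > 1. -/
theorem stmt17 (M Mf N β lam σ p q : ℝ)
    (hM : 0 < M ∧ M ≤ 1) (hMf : 0 < Mf ∧ Mf ≤ 1) (hN : 0 < N ∧ N ≤ 1)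
    (hβ0 : 0 < β) (hβ1 : β < 1) (hlam : 0 < lam) (hσ : 0 < σ)
    (hp : 0 < p ∧ p ≤ 1) (hq : 0 < q ∧ q ≤ 1)
    (a ρ δ : ℝ) (ha : a = lam * σ) (hρ : ρ = p + q - 1)
    (hδ : δ = (M - 1) * (1 - Mf * β) + a * N) (hδneg : δ < 0)
    (K Q : Matrix (Fin 2) (Fin 2) ℝ)
    (hK : K = !![p, 1 - p; 1 - q, q])
    (hQ : Q = 1 - (M + Mf * β + a * N) • K + (β * M * Mf) • (K * K)) :
    (Q.det = -δ * (-δ + (1 - ρ) * (M + a * N + Mf * β * (1 - M * (p + q)))) ∧ 0 < Q.det) ∧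
    (∀ ψ : ℝ, 1 < ψ →
      0 < (Q + (a * ψ) • (!![0, 0; 0, 1] : Matrix (Fin 2) (Fin 2) ℝ)).det) := by
  obtain ⟨hM0, hM1⟩ := hM
  obtain ⟨hMf0, hMf1⟩ := hMf
  obtain ⟨hp0, hp1⟩ := hp
  obtain ⟨hq0, hq1⟩ := hq
  have ha0 : 0 < a := ha ▸ mul_pos hlam hσ
  have hm1 : Mf * β < 1 := by nlinarith
  have hB1 : β * M * Mf ≤ 1 := by nlinarith [mul_le_mul hm1.le hM1 hM0.le zero_le_one]
  have hfirst : 1 - (M + Mf * β + a * N) + β * M * Mf = -δ := by rw [hδ]; ring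
  have hdet : Q.det = -δ * (-δ + (1 - ρ) * (M + a * N + Mf * β * (1 - M * (p + q)))) := by
    rw [hQ, hK, ← twoStateTransition, twoStateTransition.det_one_sub_smul_add_smul_sq, hfirst,
      hρ, hδ]
    ring
  have hT : 0 < M + a * N + Mf * β * (1 - M * (p + q)) :=
    add_add_mul_one_sub_mul_pos hM0 hM1 (by positivity) hm1 (mul_pos ha0 hN.1).le (by linarith)
  have hρ1 : 0 ≤ 1 - ρ := by rw [hρ]; linarith
  have hδpos : 0 < -δ := neg_pos.2 hδneg
  refine ⟨⟨hdet, by rw [hdet]; positivity⟩, fun ψ hψ => ?_⟩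
  have hQ00 : 0 < Q 0 0 := by
    rw [hQ, hK, ← twoStateTransition]
    exact twoStateTransition.one_sub_smul_add_smul_sq_zero_zero_pos hp0.le hp1 hq1
      (by positivity) hB1 (hfirst ▸ hδpos)
  rw [det_fin_two_add_smul_single_one_one, hdet]
  have : 0 < a * ψ := by positivity
  positivity
end

section
/- Let λ, σ > 0, β ∈ (0,1), ψ > 1, q̄ ∈ (0,1), a = λσ. Define ε^PP,RPE − ε^ZP,RPE₂ = v·(q̄(1+a)ψ − 1 − aψ) where v = a(λε₂ψ + aμ(ψ−1)) / (λ(1−q̄)ψ(a+1)(a(ψ−q̄) + 1−q̄)) with μ > 0, ε₂ ≥ 0, and λε₂ψ + aμ(ψ−1) > 0. Then v > 0, and hence ε^PP,RPE > ε^ZP,RPE₂ if and only if q̄(1+a)ψ > 1 + aψ; i.e., the E-stability condition of the ZP restricted perceptions equilibrium is equivalent to the PP-existence threshold exceeding the ZP-existence threshold, so that an E-stable ZP RPE and a PP RPE cannot coexist. -/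
theorem lt_iff_pos_of_sub_eq_mul {α : Type*} [Ring α] [LinearOrder α] [IsStrictOrderedRing α]
    {x y v d : α} (hv : 0 < v) (h : x - y = v * d) : y < x ↔ 0 < d := by
  rw [← sub_pos, h, mul_pos_iff_of_pos_left hv]

theorem zpRpe_slope_pos {lam a ψ qbar N : ℝ} (hlam : 0 < lam) (ha : 0 < a) (hψ : 1 < ψ)
    (hq1 : qbar < 1) (hN : 0 < N) :
    0 < a * N / (lam * (1 - qbar) * ψ * (a + 1) * (a * (ψ - qbar) + 1 - qbar)) := by
  have hq : 0 < 1 - qbar := sub_pos.2 hq1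
  have hψq : 0 < ψ - qbar := by linarith
  have hlast : 0 < a * (ψ - qbar) + 1 - qbar := by
    rw [add_sub_assoc]; positivity
  have hψ0 : 0 < ψ := by linarith
  positivity

theorem stmt18_general (lam σ ψ qbar μ ε₂ : ℝ) (hlam : 0 < lam) (hσ : 0 < σ)
    (hψ : 1 < ψ) (hq1 : qbar < 1)
    (a : ℝ) (ha : a = lam * σ)
    (hnum : 0 < lam * ε₂ * ψ + a * μ * (ψ - 1))
    (v εPP εZP : ℝ)
    (hv : v = a * (lam * ε₂ * ψ + a * μ * (ψ - 1)) /
      (lam * (1 - qbar) * ψ * (a + 1) * (a * (ψ - qbar) + 1 - qbar)))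
    (hdiff : εPP - εZP = v * (qbar * (1 + a) * ψ - 1 - a * ψ)) :
    0 < v ∧ (εZP < εPP ↔ 1 + a * ψ < qbar * (1 + a) * ψ) := by
  have ha0 : 0 < a := ha ▸ mul_pos hlam hσ
  have hv0 : 0 < v := hv ▸ zpRpe_slope_pos hlam ha0 hψ hq1 hnum
  refine ⟨hv0, ?_⟩
  rw [lt_iff_pos_of_sub_eq_mul hv0 hdiff, sub_sub, sub_pos]

/-- With v = a(λε₂ψ + aμ(ψ−1)) / (λ(1−q̄)ψ(a+1)(a(ψ−q̄)+1−q̄)) > 0 and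
ε^PP,RPE − ε^ZP,RPE₂ = v·(q̄(1+a)ψ − 1 − aψ), we have ε^PP,RPE > ε^ZP,RPE₂ iff
q̄(1+a)ψ > 1 + aψ, i.e. the E-stability condition for the ZP RPE; so an E-stable ZP RPE
and a PP RPE cannot coexist. -/
theorem stmt18 (lam σ β ψ qbar μ ε₂ : ℝ) (hlam : 0 < lam) (hσ : 0 < σ)
    (hβ0 : 0 < β) (hβ1 : β < 1) (hψ : 1 < ψ) (hq0 : 0 < qbar) (hq1 : qbar < 1)
    (hμ : 0 < μ) (hε₂ : 0 ≤ ε₂)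
    (a : ℝ) (ha : a = lam * σ)
    (hnum : 0 < lam * ε₂ * ψ + a * μ * (ψ - 1))
    (v εPP εZP : ℝ)
    (hv : v = a * (lam * ε₂ * ψ + a * μ * (ψ - 1)) /
      (lam * (1 - qbar) * ψ * (a + 1) * (a * (ψ - qbar) + 1 - qbar)))
    (hdiff : εPP - εZP = v * (qbar * (1 + a) * ψ - 1 - a * ψ)) :
    0 < v ∧ (εZP < εPP ↔ 1 + a * ψ < qbar * (1 + a) * ψ) :=
  stmt18_general lam σ ψ qbar μ ε₂ hlam hσ hψ hq1 a ha hnum v εPP εZP hv hdiff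
end

section
/- Let β ∈ (0,1), λ, σ > 0, ψ > 1, and consider the sequence a_j ∈ ℝ² defined by a_0 = Γ and a_j = A·a_{j−1} for j ≥ 1, where A = [[M, σN],[Mλ, M_f β + λσN]] with 0 < M, M_f, N ≤ 1, and Γ = (−σī, −λσī)ᵀ with ī < 0. If (M−1)(1−M_f β) + λσN < 0, then a_j → 0 as j → ∞; in particular both components of a_j remain bounded, so the time-0 effect of a forward-guidance rate cut T periods ahead, ∂π₀/∂ī = (A^T Γ)₂/ī, tends to 0 as T → ∞ (no forward guidance puzzle). Conversely, if M = M_f = N = 1, then (M−1)(1−M_f β) + λσN = λσ > 0, A has an eigenvalue strictly greater than 1, and |(A^T Γ)₂| → ∞ as T → ∞. -/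
/-!
The matrix `A` has positive entries, so `x ↦ A x` is monotone for the componentwise order, and its
Perron root `ρ`, the larger root of its characteristic polynomial `χ`, has positive left and right
eigenvectors. Since `χ(1) = (1 - M)(1 - M_f β - λσN) - MλσN = -((M-1)(1-M_f β) + λσN)`, the sign of the stability condition decides on which side of `1` the Perron root lies.
If `ρ < 1`, pairing `A^j Γ ≥ 0` with a positive left eigenvector gives `⟪w, A^j Γ⟫ = ρ^j ⟪w, Γ⟫`,
which squeezes every component of `A^j Γ` to `0`. If `ρ > 1`, then `Γ ≥ ε v` for a positive right
eigenvector `v`, and monotonicity gives `A^j Γ ≥ ε ρ^j v`, which diverges.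
-/

open Filter Topology Matrix

namespace Matrix

variable {ι : Type*} [Fintype ι] {A : Matrix ι ι ℝ}

theorem mulVec_le_mulVec (hA : ∀ i j, 0 ≤ A i j) {x y : ι → ℝ} (hxy : x ≤ y) :
    A *ᵥ x ≤ A *ᵥ y := by
  intro i
  have h : 0 ≤ (A *ᵥ (y - x)) i :=
    Finset.sum_nonneg fun j _ => mul_nonneg (hA i j) (sub_nonneg.2 (hxy j))
  rwa [mulVec_sub, Pi.sub_apply, sub_nonneg] at h

variable [DecidableEq ι]

theorem pow_mulVec_le_pow_mulVec (hA : ∀ i j, 0 ≤ A i j) {x y : ι → ℝ} (hxy : x ≤ y) (n : ℕ) :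
    (A ^ n) *ᵥ x ≤ (A ^ n) *ᵥ y := by
  induction n with
  | zero => simpa using hxy
  | succ n ih =>
    simp only [pow_succ', ← mulVec_mulVec]
    exact mulVec_le_mulVec hA ih

theorem pow_mulVec_nonneg (hA : ∀ i j, 0 ≤ A i j) {x : ι → ℝ} (hx : 0 ≤ x) (n : ℕ) :
    0 ≤ (A ^ n) *ᵥ x := by
  simpa using pow_mulVec_le_pow_mulVec hA hx n

theorem vecMul_pow_of_vecMul_eq_smul {w : ι → ℝ} {ρ : ℝ} (hw : w ᵥ* A = ρ • w) (n : ℕ) :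
    w ᵥ* (A ^ n) = ρ ^ n • w := by
  induction n with
  | zero => simp
  | succ n ih => rw [pow_succ, ← vecMul_vecMul, ih, smul_vecMul, hw, smul_smul, pow_succ]

theorem pow_mulVec_of_mulVec_eq_smul {v : ι → ℝ} {ρ : ℝ} (hv : A *ᵥ v = ρ • v) (n : ℕ) :
    (A ^ n) *ᵥ v = ρ ^ n • v := by
  induction n with
  | zero => simp
  | succ n ih => rw [pow_succ', ← mulVec_mulVec, ih, mulVec_smul, hv, smul_smul, pow_succ]

theorem tendsto_pow_mulVec_nhds_zero (hA : ∀ i j, 0 ≤ A i j) {w x : ι → ℝ} {ρ : ℝ}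
    (hw : ∀ i, 0 < w i) (hwA : w ᵥ* A = ρ • w) (hρ₀ : 0 ≤ ρ) (hρ₁ : ρ < 1) (hx : 0 ≤ x) :
    Tendsto (fun n : ℕ => (A ^ n) *ᵥ x) atTop (𝓝 0) := by
  refine tendsto_pi_nhds.2 fun i => ?_
  have hupper : ∀ n : ℕ, ((A ^ n) *ᵥ x) i ≤ ρ ^ n * (w ⬝ᵥ x / w i) := fun n => by
    have hpair : w ⬝ᵥ ((A ^ n) *ᵥ x) = ρ ^ n * (w ⬝ᵥ x) := by
      rw [dotProduct_mulVec, vecMul_pow_of_vecMul_eq_smul hwA, smul_dotProduct, smul_eq_mul]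
    have hterm : w i * ((A ^ n) *ᵥ x) i ≤ w ⬝ᵥ ((A ^ n) *ᵥ x) :=
      Finset.single_le_sum (f := fun k => w k * ((A ^ n) *ᵥ x) k)
        (fun k _ => mul_nonneg (hw k).le (pow_mulVec_nonneg hA hx n k)) (Finset.mem_univ i)
    rw [mul_div_assoc', le_div_iff₀ (hw i), ← hpair, mul_comm]
    exact hterm
  refine squeeze_zero (fun n => pow_mulVec_nonneg hA hx n i) hupper ?_
  simpa using (tendsto_pow_atTop_nhds_zero_of_lt_one hρ₀ hρ₁).mul_const (w ⬝ᵥ x / w i)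

theorem tendsto_pow_mulVec_apply_atTop (hA : ∀ i j, 0 ≤ A i j) {v x : ι → ℝ} {ρ ε : ℝ}
    (hAv : A *ᵥ v = ρ • v) (hρ : 1 < ρ) (hε : 0 < ε) (hvx : ε • v ≤ x) {i : ι} (hvi : 0 < v i) :
    Tendsto (fun n : ℕ => ((A ^ n) *ᵥ x) i) atTop atTop := by
  have hlower : ∀ n : ℕ, ε * v i * ρ ^ n ≤ ((A ^ n) *ᵥ x) i := fun n => by
    have h := pow_mulVec_le_pow_mulVec hA hvx n i
    rw [mulVec_smul, pow_mulVec_of_mulVec_eq_smul hAv] at h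
    simpa [mul_comm, mul_left_comm, mul_assoc] using h
  exact tendsto_atTop_mono hlower
    ((tendsto_pow_atTop_atTop_of_one_lt hρ).const_mul_atTop (mul_pos hε hvi))

end Matrix

theorem exists_pos_smul_le {ι : Type*} [Finite ι] {x : ι → ℝ} (hx : ∀ i, 0 < x i)
    (v : ι → ℝ) : ∃ ε : ℝ, 0 < ε ∧ ε • v ≤ x := by
  have hsmall : ∀ᶠ ε in 𝓝[>] (0 : ℝ), ∀ i, ε * v i < x i := by
    refine nhdsWithin_le_nhds (eventually_all.2 fun i => ?_)
    have hcont : Tendsto (fun ε : ℝ => ε * v i) (𝓝 0) (𝓝 0) := by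
      simpa using (continuous_mul_const (v i)).tendsto 0
    exact hcont.eventually (eventually_lt_nhds (hx i))
  obtain ⟨ε, hε, hεpos⟩ := (hsmall.and self_mem_nhdsWithin).exists
  exact ⟨ε, hεpos, fun i => (hε i).le⟩

theorem exists_forall_abs_apply_le_of_tendsto {ι : Type*} [Fintype ι] {u : ℕ → ι → ℝ}
    {x : ι → ℝ} (hu : Tendsto u atTop (𝓝 x)) : ∃ C, ∀ n i, |u n i| ≤ C := by
  obtain ⟨C, hC⟩ := isBounded_iff_forall_norm_le.1 (Metric.isBounded_range_of_tendsto u hu)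
  exact ⟨C, fun n i => (norm_le_pi_norm (u n) i).trans (hC _ ⟨n, rfl⟩)⟩

section PerronRoot

variable (a b c d : ℝ)

noncomputable def perronRoot : ℝ := (a + d + √((a - d) ^ 2 + 4 * (b * c))) / 2

variable {a b c d}

theorem perronRoot_sq (hbc : 0 ≤ b * c) :
    perronRoot a b c d ^ 2 = (a + d) * perronRoot a b c d - (a * d - b * c) := by
  have hdisc := Real.sq_sqrt (by positivity : 0 ≤ (a - d) ^ 2 + 4 * (b * c))
  unfold perronRoot
  linear_combination hdisc / 4

theorem lt_perronRoot (hbc : 0 < b * c) : a < perronRoot a b c d := by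
  have := Real.lt_sqrt_of_sq_lt (by linarith : (a - d) ^ 2 < (a - d) ^ 2 + 4 * (b * c))
  unfold perronRoot
  linarith

theorem perronRoot_lt_one (hbc : 0 ≤ b * c) (ha : a < 1) (h : b * c < (1 - a) * (1 - d)) :
    perronRoot a b c d < 1 := by
  have hd : d < 1 := by nlinarith
  have := (Real.sqrt_lt' (by linarith : (0 : ℝ) < 2 - a - d)).2
    (by nlinarith : (a - d) ^ 2 + 4 * (b * c) < (2 - a - d) ^ 2)
  unfold perronRoot
  linarith

theorem one_lt_perronRoot (h : (1 - a) * (1 - d) < b * c) : 1 < perronRoot a b c d := by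
  have := Real.lt_sqrt_of_sq_lt (by nlinarith : (2 - a - d) ^ 2 < (a - d) ^ 2 + 4 * (b * c))
  unfold perronRoot
  linarith

theorem vecMul_perronRoot (hbc : 0 ≤ b * c) :
    ![c, perronRoot a b c d - a] ᵥ* !![a, b; c, d] =
      perronRoot a b c d • ![c, perronRoot a b c d - a] := by
  have hρ := perronRoot_sq (a := a) (d := d) hbc
  ext i
  fin_cases i <;>
    simp only [vecMul, dotProduct, Fin.sum_univ_two, of_apply, cons_val', cons_val_zero,
      cons_val_one, cons_val_fin_one, Fin.zero_eta, Fin.mk_one, Pi.smul_apply, smul_eq_mul]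
  · ring
  · linear_combination -hρ

theorem mulVec_perronRoot (hbc : 0 ≤ b * c) :
    !![a, b; c, d] *ᵥ ![b, perronRoot a b c d - a] =
      perronRoot a b c d • ![b, perronRoot a b c d - a] := by
  have hρ := perronRoot_sq (a := a) (d := d) hbc
  ext i
  fin_cases i <;>
    simp only [mulVec, dotProduct, Fin.sum_univ_two, of_apply, cons_val', cons_val_zero,
      cons_val_one, cons_val_fin_one, Fin.zero_eta, Fin.mk_one, Pi.smul_apply, smul_eq_mul]
  · ring
  · linear_combination -hρ

theorem isRoot_charpoly_perronRoot (hbc : 0 ≤ b * c) :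
    (!![a, b; c, d]).charpoly.IsRoot (perronRoot a b c d) := by
  simp only [charpoly_fin_two, trace_fin_two_of, det_fin_two_of, Polynomial.IsRoot,
    Polynomial.eval_add, Polynomial.eval_sub, Polynomial.eval_mul, Polynomial.eval_pow,
    Polynomial.eval_C, Polynomial.eval_X]
  linear_combination perronRoot_sq (a := a) (d := d) hbc

end PerronRoot

theorem stmt19_general (β lam σ M Mf N ibar : ℝ) (hβ0 : 0 < β)
    (hlam : 0 < lam) (hσ : 0 < σ)
    (hM : 0 < M ∧ M ≤ 1) (hMf : 0 < Mf ∧ Mf ≤ 1) (hN : 0 < N ∧ N ≤ 1)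
    (hibar : ibar < 0)
    (A : Matrix (Fin 2) (Fin 2) ℝ) (Γ : Fin 2 → ℝ)
    (hA : A = !![M, σ * N; M * lam, Mf * β + lam * σ * N])
    (hΓ : Γ = ![-σ * ibar, -lam * σ * ibar]) :
    ((M - 1) * (1 - Mf * β) + lam * σ * N < 0 →
      Filter.Tendsto (fun j : ℕ => (A ^ j).mulVec Γ) Filter.atTop (nhds 0) ∧
      (∃ C : ℝ, ∀ (j : ℕ) (i : Fin 2), |((A ^ j).mulVec Γ) i| ≤ C) ∧
      Filter.Tendsto (fun T : ℕ => ((A ^ T).mulVec Γ) 1 / ibar) Filter.atTop (nhds 0)) ∧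
    (M = 1 → Mf = 1 → N = 1 →
      (M - 1) * (1 - Mf * β) + lam * σ * N = lam * σ ∧ 0 < lam * σ ∧
      (∃ z : ℝ, 1 < z ∧ A.charpoly.IsRoot z) ∧
      Filter.Tendsto (fun T : ℕ => |((A ^ T).mulVec Γ) 1|) Filter.atTop Filter.atTop) := by
  obtain ⟨hM₀, hM₁⟩ := hM
  obtain ⟨hMf₀, -⟩ := hMf
  obtain ⟨hN₀, -⟩ := hN
  have hbc : 0 < σ * N * (M * lam) := by positivity
  have hA₀ : ∀ i j, 0 ≤ A i j := by
    subst hA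
    simp only [Fin.forall_fin_two, of_apply, cons_val', cons_val_zero, cons_val_one,
      empty_val', cons_val_fin_one]
    refine ⟨⟨?_, ?_⟩, ?_, ?_⟩ <;> positivity
  have hΓ₀ : ∀ i, 0 < Γ i := by
    subst hΓ
    simp only [Fin.forall_fin_two, cons_val_zero, cons_val_one]
    constructor <;> nlinarith [mul_pos hlam hσ]
  subst hA
  refine ⟨fun hstable => ?_, ?_⟩
  · have hM1 : M < 1 := hM₁.lt_of_ne (by rintro rfl; nlinarith)
    set ρ := perronRoot M (σ * N) (M * lam) (Mf * β + lam * σ * N)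
    have hρ : M < ρ := lt_perronRoot hbc
    have hw : ∀ i, 0 < ![M * lam, ρ - M] i := by
      simp only [Fin.forall_fin_two, cons_val_zero, cons_val_one]
      exact ⟨by positivity, by linarith⟩
    have hlim := tendsto_pow_mulVec_nhds_zero hA₀ hw (vecMul_perronRoot hbc.le) (by linarith)
      (perronRoot_lt_one hbc.le hM1 (by linarith)) fun i => (hΓ₀ i).le
    exact ⟨hlim, exists_forall_abs_apply_le_of_tendsto hlim,
      by simpa using (tendsto_pi_nhds.1 hlim 1).div_const ibar⟩
  · rintro rfl rfl rfl
    set ρ := perronRoot 1 (σ * 1) (1 * lam) (1 * β + lam * σ * 1)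
    have hρ : 1 < ρ := one_lt_perronRoot (by linarith)
    obtain ⟨ε, hε, hεΓ⟩ := exists_pos_smul_le hΓ₀ ![σ * 1, ρ - 1]
    refine ⟨by ring, by positivity, ⟨_, hρ, isRoot_charpoly_perronRoot hbc.le⟩, ?_⟩
    exact tendsto_abs_atTop_atTop.comp <| tendsto_pow_mulVec_apply_atTop hA₀
      (mulVec_perronRoot hbc.le) hρ hε hεΓ (i := 1) (sub_pos.2 hρ)

/-- For the forward-guidance recursion a_j = A^j·Γ with
A = [[M, σN],[Mλ, M_fβ + λσN]] and Γ = (−σī, −λσī)ᵀ, ī < 0: if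
(M−1)(1−M_fβ) + λσN < 0 then A^j·Γ → 0 (so components are bounded and
∂π₀/∂ī = (A^TΓ)₂/ī → 0: no forward guidance puzzle); conversely, if M = M_f = N = 1 then
(M−1)(1−M_fβ) + λσN = λσ > 0, A has a real eigenvalue exceeding 1, and |(A^TΓ)₂| → ∞. -/
theorem stmt19 (β lam σ ψ M Mf N ibar : ℝ) (hβ0 : 0 < β) (hβ1 : β < 1)
    (hlam : 0 < lam) (hσ : 0 < σ) (hψ : 1 < ψ)
    (hM : 0 < M ∧ M ≤ 1) (hMf : 0 < Mf ∧ Mf ≤ 1) (hN : 0 < N ∧ N ≤ 1)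
    (hibar : ibar < 0)
    (A : Matrix (Fin 2) (Fin 2) ℝ) (Γ : Fin 2 → ℝ)
    (hA : A = !![M, σ * N; M * lam, Mf * β + lam * σ * N])
    (hΓ : Γ = ![-σ * ibar, -lam * σ * ibar]) :
    ((M - 1) * (1 - Mf * β) + lam * σ * N < 0 →
      Filter.Tendsto (fun j : ℕ => (A ^ j).mulVec Γ) Filter.atTop (nhds 0) ∧
      (∃ C : ℝ, ∀ (j : ℕ) (i : Fin 2), |((A ^ j).mulVec Γ) i| ≤ C) ∧
      Filter.Tendsto (fun T : ℕ => ((A ^ T).mulVec Γ) 1 / ibar) Filter.atTop (nhds 0)) ∧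
    (M = 1 → Mf = 1 → N = 1 →
      (M - 1) * (1 - Mf * β) + lam * σ * N = lam * σ ∧ 0 < lam * σ ∧
      (∃ z : ℝ, 1 < z ∧ A.charpoly.IsRoot z) ∧
      Filter.Tendsto (fun T : ℕ => |((A ^ T).mulVec Γ) 1|) Filter.atTop Filter.atTop) :=
  stmt19_general β lam σ M Mf N ibar hβ0 hlam hσ hM hMf hN hibar A Γ hA hΓ
end
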